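/- (Existence, supersolution part.) The pathwise value function U is a pathwise viscosity supersolution of the stochastic HJB equation dv = −√ν ∇v ∘ dW(s) + (V(x) − ‖∇v‖²/2) ds with terminal data S: U is lower semicontinuous and bounded below, U(T,·) ≥ S, and whenever φ ∈ C²_b(ℝⁿ), g ∈ C¹([0,T]) and (s,x) ↦ U(s,x) − Φ_φ(s,x) − g(s) attains a local minimum at (s₀,x₀) ∈ (0,T) × ℝⁿ, then −g′(s₀) ≥ V(x₀) − ‖∇φ(x₀ + √ν(W(T) − W(s₀)))‖²/2. -/

import Mathlib

open MeasureTheory Set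

/-- The controlled path `Z_s^{t,x,u} = x + ∫_t^s u(r) dr + √ν (W(s) - W(t))`. -/
noncomputable def ctrlPath {n : ℕ} (ν : ℝ) (W : ℝ → EuclideanSpace ℝ (Fin n))
    (t : ℝ) (x : EuclideanSpace ℝ (Fin n)) (u : ℝ → EuclideanSpace ℝ (Fin n))
    (s : ℝ) : EuclideanSpace ℝ (Fin n) :=
  x + (∫ r in t..s, u r) + Real.sqrt ν • (W s - W t)

/-- The pathwise action `J(t,x,u)`. -/
noncomputable def action {n : ℕ} (T ν : ℝ) (W : ℝ → EuclideanSpace ℝ (Fin n))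
    (V S : EuclideanSpace ℝ (Fin n) → ℝ) (t : ℝ) (x : EuclideanSpace ℝ (Fin n))
    (u : ℝ → EuclideanSpace ℝ (Fin n)) : ℝ :=
  (∫ s in t..T, (‖u s‖ ^ 2 / 2 + V (ctrlPath ν W t x u s))) + S (ctrlPath ν W t x u T)

/-- An admissible control: measurable and uniformly bounded by `C`. -/
def IsAdmissible {n : ℕ} (C : ℝ) (u : ℝ → EuclideanSpace ℝ (Fin n)) : Prop :=
  Measurable u ∧ ∀ s, ‖u s‖ ≤ C

/-- The pathwise value function `U(t,x) = inf { J(t,x,u) : u admissible }`. -/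
noncomputable def value {n : ℕ} (T ν C : ℝ) (W : ℝ → EuclideanSpace ℝ (Fin n))
    (V S : EuclideanSpace ℝ (Fin n) → ℝ) (t : ℝ) (x : EuclideanSpace ℝ (Fin n)) : ℝ :=
  sInf {r | ∃ u : ℝ → EuclideanSpace ℝ (Fin n), IsAdmissible C u ∧ r = action T ν W V S t x u}

/-- `φ ∈ C²_b`: twice continuously differentiable with `φ` and its first two derivatives
bounded. -/
def IsC2b {E : Type*} [NormedAddCommGroup E] [NormedSpace ℝ E] (φ : E → ℝ) : Prop :=
  ContDiff ℝ 2 φ ∧ ∃ M : ℝ, ∀ y,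
    |φ y| ≤ M ∧ ‖fderiv ℝ φ y‖ ≤ M ∧ ‖fderiv ℝ (fderiv ℝ φ) y‖ ≤ M

section helpers
variable {n : ℕ} {C ν T : ℝ} {W u : ℝ → EuclideanSpace ℝ (Fin n)}
  {V : EuclideanSpace ℝ (Fin n) → ℝ}

lemma adm_intervalIntegrable (hu : IsAdmissible C u) (a b : ℝ) :
    IntervalIntegrable u MeasureTheory.volume a b := by
  rw [intervalIntegrable_iff]
  refine Measure.integrableOn_of_bounded (M := C) ?_ hu.1.aestronglyMeasurable ?_
  · rw [Set.uIoc]; exact measure_Ioc_lt_top.ne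
  · exact ae_of_all _ fun s => hu.2 s

lemma norm_intInt_le (hu : IsAdmissible C u) (a b : ℝ) :
    ‖∫ r in a..b, u r‖ ≤ C * |b - a| :=
  intervalIntegral.norm_integral_le_of_norm_le_const fun x _ => hu.2 x

lemma ctrlPath_flow (hu : IsAdmissible C u) (t t' : ℝ) (x : EuclideanSpace ℝ (Fin n)) (s : ℝ) :
    ctrlPath ν W t' (ctrlPath ν W t x u t') u s = ctrlPath ν W t x u s := by
  unfold ctrlPath
  have h := intervalIntegral.integral_add_adjacent_intervals
    (adm_intervalIntegrable hu t t') (adm_intervalIntegrable hu t' s)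
  rw [← h]
  module

lemma ctrlPath_continuousOn (hW : ContinuousOn W (Icc 0 T)) (hu : IsAdmissible C u)
    (t : ℝ) (x : EuclideanSpace ℝ (Fin n)) :
    ContinuousOn (fun s => ctrlPath ν W t x u s) (Icc 0 T) := by
  have h1 : Continuous fun s => ∫ r in t..s, u r :=
    intervalIntegral.continuous_primitive (fun a b => adm_intervalIntegrable hu a b) t
  exact ((continuous_const.add h1).continuousOn.add
    (ContinuousOn.smul (f := fun _ => Real.sqrt ν) (g := fun s => W s - W t) continuousOn_const
      (ContinuousOn.sub (f := W) (g := fun _ => W t) hW continuousOn_const)))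

lemma ctrlPath_dist (hu : IsAdmissible C u) (t t' s : ℝ) (x x' : EuclideanSpace ℝ (Fin n)) :
    ‖ctrlPath ν W t x u s - ctrlPath ν W t' x' u s‖ ≤
      ‖x - x'‖ + C * |t - t'| + Real.sqrt ν * ‖W t - W t'‖ := by
  have key : ctrlPath ν W t x u s - ctrlPath ν W t' x' u s =
      (x - x') + (∫ r in t..t', u r) + Real.sqrt ν • (W t' - W t) := by
    unfold ctrlPath
    have h := intervalIntegral.integral_add_adjacent_intervals
      (adm_intervalIntegrable hu t t') (adm_intervalIntegrable hu t' s)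
    rw [← h]; module
  rw [key]
  refine le_trans (norm_add₃_le) ?_
  gcongr
  · rw [abs_sub_comm]; exact norm_intInt_le hu t t'
  · rw [norm_smul, Real.norm_eq_abs, abs_of_nonneg (Real.sqrt_nonneg _), ← norm_neg]
    simp [norm_sub_rev]

end helpers

section helpers2
variable {n : ℕ} {C ν T : ℝ} {W u : ℝ → EuclideanSpace ℝ (Fin n)}
  {V S : EuclideanSpace ℝ (Fin n) → ℝ}

lemma sqnorm_integrableOn (hu : IsAdmissible C u) (s : Set ℝ) (hs : MeasureTheory.volume s ≠ ⊤) :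
    IntegrableOn (fun r => ‖u r‖ ^ 2 / 2) s := by
  refine Measure.integrableOn_of_bounded (M := C ^ 2 / 2) hs
    (((hu.1.norm.pow_const 2).div_const 2).aestronglyMeasurable) (ae_of_all _ fun r => ?_)
  have h1 : 0 ≤ ‖u r‖ := norm_nonneg _
  have h2 := hu.2 r
  rw [Real.norm_eq_abs, abs_of_nonneg (by positivity)]
  nlinarith

lemma cost_intervalIntegrable (hW : ContinuousOn W (Icc 0 T)) (hVc : Continuous V)
    (hu : IsAdmissible C u) (t : ℝ) (x : EuclideanSpace ℝ (Fin n)) {a b : ℝ}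
    (ha : a ∈ Icc 0 T) (hb : b ∈ Icc 0 T) :
    IntervalIntegrable (fun s => ‖u s‖ ^ 2 / 2 + V (ctrlPath ν W t x u s))
      MeasureTheory.volume a b := by
  have hsub : Set.uIoc a b ⊆ Icc 0 T := by
    rw [Set.uIoc]
    exact (Ioc_subset_Icc_self).trans (Icc_subset_Icc (le_min ha.1 hb.1)
      (max_le ha.2 hb.2))
  rw [intervalIntegrable_iff]
  refine IntegrableOn.mono_set ?_ hsub
  refine Integrable.add (sqnorm_integrableOn hu _ measure_Icc_lt_top.ne) ?_
  exact ((hVc.comp_continuousOn (ctrlPath_continuousOn hW hu t x)).integrableOn_compact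
    isCompact_Icc)

lemma action_split (hW : ContinuousOn W (Icc 0 T)) (hVc : Continuous V)
    (hu : IsAdmissible C u) (x : EuclideanSpace ℝ (Fin n)) {t t' : ℝ}
    (ht : t ∈ Icc 0 T) (ht' : t' ∈ Icc 0 T) :
    action T ν W V S t x u =
      (∫ s in t..t', (‖u s‖ ^ 2 / 2 + V (ctrlPath ν W t x u s))) +
        action T ν W V S t' (ctrlPath ν W t x u t') u := by
  have hT : (T : ℝ) ∈ Icc 0 T := ⟨le_trans ht.1 ht.2, le_refl _⟩
  have hflow : ∀ s, ctrlPath ν W t' (ctrlPath ν W t x u t') u s = ctrlPath ν W t x u s :=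
    ctrlPath_flow hu t t' x
  unfold action
  simp only [hflow]
  have h := intervalIntegral.integral_add_adjacent_intervals
    (cost_intervalIntegrable (ν := ν) (V := V) hW hVc hu t x ht ht')
    (cost_intervalIntegrable (ν := ν) (V := V) hW hVc hu t x ht' hT)
  rw [← h]; ring

lemma action_lb (hVbdd : ∀ y, |V y| ≤ Vbound) (hSbdd : ∀ y, |S y| ≤ Sbound)
    (hW : ContinuousOn W (Icc 0 T)) (hVc : Continuous V)
    (hu : IsAdmissible C u) {t : ℝ} (ht : t ∈ Icc 0 T) (x : EuclideanSpace ℝ (Fin n)) :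
    -(T * Vbound + Sbound) ≤ action T ν W V S t x u := by
  have hT : (T : ℝ) ∈ Icc 0 T := ⟨le_trans ht.1 ht.2, le_refl _⟩
  have hVb0 : 0 ≤ Vbound := le_trans (abs_nonneg _) (hVbdd 0)
  have hint := cost_intervalIntegrable (ν := ν) (V := V) hW hVc hu t x ht hT
  have h1 : (t - T) * Vbound ≤ ∫ s in t..T, (‖u s‖ ^ 2 / 2 + V (ctrlPath ν W t x u s)) := by
    have := intervalIntegral.integral_mono_on (μ := MeasureTheory.volume) ht.2
      (intervalIntegrable_const (c := -Vbound)) hint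
      (fun s _ => by
        have := (abs_le.1 (hVbdd (ctrlPath ν W t x u s))).1
        have : 0 ≤ ‖u s‖ ^ 2 / 2 := by positivity
        nlinarith [(abs_le.1 (hVbdd (ctrlPath ν W t x u s))).1])
    rw [intervalIntegral.integral_const, smul_eq_mul] at this
    nlinarith
  have h2 := (abs_le.1 (hSbdd (ctrlPath ν W t x u T))).1
  have ht0 := ht.1
  have htT := ht.2
  unfold action
  nlinarith

section helpers3
variable {n : ℕ} {C ν T L_V L_S Vbound Sbound : ℝ} {W u : ℝ → EuclideanSpace ℝ (Fin n)}
  {V S : EuclideanSpace ℝ (Fin n) → ℝ}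

lemma zero_admissible (hC : 0 ≤ C) : IsAdmissible C (fun _ => (0 : EuclideanSpace ℝ (Fin n))) :=
  ⟨measurable_const, fun _ => by simpa using hC⟩

lemma value_set_nonempty (hC : 0 ≤ C) (t : ℝ) (x : EuclideanSpace ℝ (Fin n)) :
    {r | ∃ u : ℝ → EuclideanSpace ℝ (Fin n),
      IsAdmissible C u ∧ r = action T ν W V S t x u}.Nonempty :=
  ⟨_, _, zero_admissible hC, rfl⟩

lemma value_set_bddBelow (hVbdd : ∀ y, |V y| ≤ Vbound) (hSbdd : ∀ y, |S y| ≤ Sbound)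
    (hW : ContinuousOn W (Icc 0 T)) (hVc : Continuous V)
    {t : ℝ} (ht : t ∈ Icc 0 T) (x : EuclideanSpace ℝ (Fin n)) :
    BddBelow {r | ∃ u : ℝ → EuclideanSpace ℝ (Fin n),
      IsAdmissible C u ∧ r = action T ν W V S t x u} := by
  refine ⟨-(T * Vbound + Sbound), fun r hr => ?_⟩
  obtain ⟨u, hu, rfl⟩ := hr
  exact action_lb hVbdd hSbdd hW hVc hu ht x

lemma value_lb (hC : 0 ≤ C) (hVbdd : ∀ y, |V y| ≤ Vbound) (hSbdd : ∀ y, |S y| ≤ Sbound)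
    (hW : ContinuousOn W (Icc 0 T)) (hVc : Continuous V)
    {t : ℝ} (ht : t ∈ Icc 0 T) (x : EuclideanSpace ℝ (Fin n)) :
    -(T * Vbound + Sbound) ≤ value T ν C W V S t x :=
  le_csInf (value_set_nonempty hC t x) fun r hr => by
    obtain ⟨u, hu, rfl⟩ := hr; exact action_lb hVbdd hSbdd hW hVc hu ht x

lemma value_le_action (hVbdd : ∀ y, |V y| ≤ Vbound) (hSbdd : ∀ y, |S y| ≤ Sbound)
    (hW : ContinuousOn W (Icc 0 T)) (hVc : Continuous V)
    {t : ℝ} (ht : t ∈ Icc 0 T) (x : EuclideanSpace ℝ (Fin n)) (hu : IsAdmissible C u) :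
    value T ν C W V S t x ≤ action T ν W V S t x u :=
  csInf_le (value_set_bddBelow hVbdd hSbdd hW hVc ht x) ⟨u, hu, rfl⟩

lemma action_compare (hC : 0 ≤ C) (hL_V : 0 ≤ L_V) (hL_S : 0 ≤ L_S)
    (hVlip : ∀ y y', |V y - V y'| ≤ L_V * ‖y - y'‖)
    (hVbdd : ∀ y, |V y| ≤ Vbound)
    (hSlip : ∀ y y', |S y - S y'| ≤ L_S * ‖y - y'‖)
    (hW : ContinuousOn W (Icc 0 T)) (hVc : Continuous V)
    (hu : IsAdmissible C u) {t t' : ℝ} (ht : t ∈ Icc 0 T) (ht' : t' ∈ Icc 0 T)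
    (x x' : EuclideanSpace ℝ (Fin n)) :
    action T ν W V S t x u ≤ action T ν W V S t' x' u +
      (L_V * T + L_S) * (‖x - x'‖ + C * |t - t'| + Real.sqrt ν * ‖W t - W t'‖) +
      (C ^ 2 / 2 + Vbound) * |t - t'| := by
  have hT : (T : ℝ) ∈ Icc 0 T := ⟨le_trans ht.1 ht.2, le_refl _⟩
  set ρ := ‖x - x'‖ + C * |t - t'| + Real.sqrt ν * ‖W t - W t'‖ with hρ
  have hρ0 : 0 ≤ ρ := by
    have := norm_nonneg (x - x')
    have := abs_nonneg (t - t')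
    have := norm_nonneg (W t - W t')
    have := Real.sqrt_nonneg ν
    positivity
  have hZ : ∀ s, ‖ctrlPath ν W t x u s - ctrlPath ν W t' x' u s‖ ≤ ρ :=
    fun s => ctrlPath_dist hu t t' s x x'
  clear_value ρ
  set f := fun s => ‖u s‖ ^ 2 / 2 + V (ctrlPath ν W t x u s) with hf
  set f' := fun s => ‖u s‖ ^ 2 / 2 + V (ctrlPath ν W t' x' u s) with hf'
  have hint : ∀ {a b : ℝ}, a ∈ Icc 0 T → b ∈ Icc 0 T →
      IntervalIntegrable f MeasureTheory.volume a b :=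
    fun ha hb => cost_intervalIntegrable hW hVc hu t x ha hb
  have hint' : ∀ {a b : ℝ}, a ∈ Icc 0 T → b ∈ Icc 0 T →
      IntervalIntegrable f' MeasureTheory.volume a b :=
    fun ha hb => cost_intervalIntegrable hW hVc hu t' x' ha hb
  have h_split : (∫ s in t..T, f s) = (∫ s in t..t', f s) + ∫ s in t'..T, f s :=
    (intervalIntegral.integral_add_adjacent_intervals (hint ht ht') (hint ht' hT)).symm
  have h_head : |∫ s in t..t', f s| ≤ (C ^ 2 / 2 + Vbound) * |t' - t| := by
    rw [← Real.norm_eq_abs]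
    refine intervalIntegral.norm_integral_le_of_norm_le_const fun s _ => ?_
    rw [Real.norm_eq_abs]
    have h1 := hu.2 s
    have h2 := hVbdd (ctrlPath ν W t x u s)
    have h3 : 0 ≤ ‖u s‖ := norm_nonneg _
    have h4 : ‖u s‖ ^ 2 / 2 ≤ C ^ 2 / 2 := by nlinarith
    calc |f s| ≤ |‖u s‖ ^ 2 / 2| + |V (ctrlPath ν W t x u s)| := abs_add_le _ _
    _ ≤ C ^ 2 / 2 + Vbound := by rw [abs_of_nonneg (by positivity)]; exact add_le_add h4 h2
  have h_tail : (∫ s in t'..T, f s) ≤ (∫ s in t'..T, f' s) + (T - t') * (L_V * ρ) := by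
    have hmono := intervalIntegral.integral_mono_on (μ := MeasureTheory.volume) ht'.2
      (hint ht' hT) ((hint' ht' hT).add (intervalIntegrable_const (c := L_V * ρ)))
      (fun s _ => by
        have h1 := hVlip (ctrlPath ν W t x u s) (ctrlPath ν W t' x' u s)
        have h2 := hZ s
        have h3 := (abs_le.1 h1).1
        have h4 := (abs_le.1 h1).2
        have h5 : L_V * ‖ctrlPath ν W t x u s - ctrlPath ν W t' x' u s‖ ≤ L_V * ρ :=
          mul_le_mul_of_nonneg_left h2 hL_V
        simp only [hf, hf', Pi.add_apply]
        nlinarith)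
    rwa [intervalIntegral.integral_add (hint' ht' hT) (intervalIntegrable_const),
      intervalIntegral.integral_const, smul_eq_mul] at hmono
  have h_S : S (ctrlPath ν W t x u T) ≤ S (ctrlPath ν W t' x' u T) + L_S * ρ := by
    have h1 := hSlip (ctrlPath ν W t x u T) (ctrlPath ν W t' x' u T)
    have h2 := hZ T
    nlinarith [(abs_le.1 h1).2, mul_le_mul_of_nonneg_left h2 hL_S]
  have habs : |t' - t| = |t - t'| := abs_sub_comm _ _
  have hTt' : (T - t') * (L_V * ρ) ≤ T * (L_V * ρ) := by
    have : 0 ≤ L_V * ρ := mul_nonneg hL_V hρ0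
    nlinarith [ht'.1]
  have hHead := (abs_le.1 h_head).2
  rw [habs] at hHead
  have hexp : (L_V * T + L_S) * ρ = T * (L_V * ρ) + L_S * ρ := by ring
  have hsp2 : (∫ s in t..T, f s) = (∫ s in t..t', f s) + ∫ s in t'..T, f s := h_split
  have hfinal : (∫ s in t..T, f s) + S (ctrlPath ν W t x u T) ≤
      ((∫ s in t'..T, f' s) + S (ctrlPath ν W t' x' u T)) +
      (L_V * T + L_S) * ρ + (C ^ 2 / 2 + Vbound) * |t - t'| := by
    rw [hsp2]
    refine le_trans (add_le_add (add_le_add hHead h_tail) h_S) ?_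
    linarith
  exact hfinal
end helpers3

section helpers4
variable {n : ℕ} {C ν T L_V L_S Vbound Sbound : ℝ} {W u : ℝ → EuclideanSpace ℝ (Fin n)}
  {V S : EuclideanSpace ℝ (Fin n) → ℝ}

lemma value_compare (hC : 0 ≤ C) (hL_V : 0 ≤ L_V) (hL_S : 0 ≤ L_S)
    (hVlip : ∀ y y', |V y - V y'| ≤ L_V * ‖y - y'‖)
    (hVbdd : ∀ y, |V y| ≤ Vbound) (hSbdd : ∀ y, |S y| ≤ Sbound)
    (hSlip : ∀ y y', |S y - S y'| ≤ L_S * ‖y - y'‖)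
    (hW : ContinuousOn W (Icc 0 T)) (hVc : Continuous V)
    {t t' : ℝ} (ht : t ∈ Icc 0 T) (ht' : t' ∈ Icc 0 T) (x x' : EuclideanSpace ℝ (Fin n)) :
    value T ν C W V S t x ≤ value T ν C W V S t' x' +
      ((L_V * T + L_S) * (‖x - x'‖ + C * |t - t'| + Real.sqrt ν * ‖W t - W t'‖) +
       (C ^ 2 / 2 + Vbound) * |t - t'|) := by
  rw [← sub_le_iff_le_add]
  refine le_csInf (value_set_nonempty hC t' x') fun r hr => ?_
  obtain ⟨u, hu, rfl⟩ := hr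
  have h1 := value_le_action (ν := ν) hVbdd hSbdd hW hVc ht x hu
  have h2 := action_compare (ν := ν) (S := S) hC hL_V hL_S hVlip hVbdd hSlip hW hVc hu ht ht' x x'
  linarith

lemma value_terminal (hC : 0 ≤ C) (y : EuclideanSpace ℝ (Fin n)) :
    S y ≤ value T ν C W V S T y := by
  refine le_csInf (value_set_nonempty hC T y) fun r hr => ?_
  obtain ⟨u, hu, rfl⟩ := hr
  have hZ : ctrlPath ν W T y u T = y := by
    unfold ctrlPath
    simp
  unfold action
  rw [hZ, intervalIntegral.integral_same]
  simp

end helpers4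

section part4
variable {n : ℕ} {C ν T L_V L_S Vbound Sbound : ℝ} {W : ℝ → EuclideanSpace ℝ (Fin n)}
  {V S : EuclideanSpace ℝ (Fin n) → ℝ}

-- Second-order Taylor-type lower bound for a C²_b function.
lemma taylor_lb {φ : EuclideanSpace ℝ (Fin n) → ℝ} {M : ℝ}
    (hφ2 : ContDiff ℝ 2 φ) (hM : ∀ y, ‖fderiv ℝ (fderiv ℝ φ) y‖ ≤ M)
    (y₀ v : EuclideanSpace ℝ (Fin n)) :
    -(M * ‖v‖ ^ 2) ≤ φ (y₀ + v) - φ y₀ - (inner ℝ (gradient φ y₀) v : ℝ) := by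
  have hφdiff : Differentiable ℝ φ := hφ2.differentiable (by norm_num)
  have hM0 : 0 ≤ M := le_trans (ContinuousLinearMap.opNorm_nonneg _) (hM 0)
  have hgrad : ∀ w, fderiv ℝ φ y₀ w = (inner ℝ (gradient φ y₀) w : ℝ) := fun w => by
    rw [gradient, InnerProductSpace.toDual_symm_apply]
  have hfd : Differentiable ℝ (fderiv ℝ φ) :=
    (hφ2.fderiv_right (m := 1) (by norm_num)).differentiable one_ne_zero
  have hfd_lip : ∀ a b, ‖fderiv ℝ φ a - fderiv ℝ φ b‖ ≤ M * ‖a - b‖ := fun a b =>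
    convex_univ.norm_image_sub_le_of_norm_fderiv_le (fun x _ => (hfd x))
      (fun x _ => hM x) (mem_univ b) (mem_univ a)
  set χ : ℝ → ℝ := fun τ => φ (y₀ + τ • v) - τ * (inner ℝ (gradient φ y₀) v : ℝ) with hχ
  set χ' : ℝ → ℝ := fun τ => fderiv ℝ φ (y₀ + τ • v) v - (inner ℝ (gradient φ y₀) v : ℝ) with hχ'
  have hpath : ∀ τ : ℝ, HasDerivAt (fun τ : ℝ => y₀ + τ • v) v τ := fun τ => by
    simpa using ((hasDerivAt_id τ).smul_const v).const_add y₀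
  have hχd : ∀ τ : ℝ, HasDerivAt χ (χ' τ) τ := fun τ => by
    have h1 := ((hφdiff (y₀ + τ • v)).hasFDerivAt).comp_hasDerivAt τ (hpath τ)
    exact h1.sub (hasDerivAt_mul_const _)
  have hbound : ∀ τ ∈ Icc (0:ℝ) 1, ‖χ' τ‖ ≤ M * ‖v‖ ^ 2 := fun τ hτ => by
    have h1 : χ' τ = (fderiv ℝ φ (y₀ + τ • v) - fderiv ℝ φ y₀) v := by
      show fderiv ℝ φ (y₀ + τ • v) v - (inner ℝ (gradient φ y₀) v : ℝ) = _
      rw [ContinuousLinearMap.sub_apply, hgrad v]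
    rw [h1]
    calc ‖(fderiv ℝ φ (y₀ + τ • v) - fderiv ℝ φ y₀) v‖
        ≤ ‖fderiv ℝ φ (y₀ + τ • v) - fderiv ℝ φ y₀‖ * ‖v‖ :=
          ContinuousLinearMap.le_opNorm _ _
      _ ≤ (M * ‖τ • v‖) * ‖v‖ := by
          have := hfd_lip (y₀ + τ • v) y₀
          rw [add_sub_cancel_left] at this
          exact mul_le_mul_of_nonneg_right this (norm_nonneg _)
      _ ≤ (M * ((1:ℝ) * ‖v‖)) * ‖v‖ := by
          rw [norm_smul, Real.norm_eq_abs, abs_of_nonneg hτ.1]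
          gcongr
          exact hτ.2
      _ = M * ‖v‖ ^ 2 := by ring
  have hmvt : ‖χ 1 - χ 0‖ ≤ (M * ‖v‖ ^ 2) * ‖(1:ℝ) - 0‖ :=
    (convex_Icc 0 1).norm_image_sub_le_of_norm_hasDerivWithin_le
      (f' := χ') (fun τ _ => (hχd τ).hasDerivWithinAt) hbound
      (by norm_num) (by norm_num)
  have hval : χ 1 - χ 0 = φ (y₀ + v) - φ y₀ - (inner ℝ (gradient φ y₀) v : ℝ) := by
    simp [hχ]
    ring
  rw [hval, sub_zero, norm_one, mul_one, Real.norm_eq_abs] at hmvt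
  linarith [(abs_le.1 hmvt).1]
end part4

section part4b
variable {n : ℕ} {C ν T L_V L_S Vbound Sbound : ℝ} {W : ℝ → EuclideanSpace ℝ (Fin n)}
  {V S : EuclideanSpace ℝ (Fin n) → ℝ}

set_option maxHeartbeats 2000000 in
lemma part4_main
    (hT : 0 < T) (hν : 0 < ν) (hC : 0 < C) (hL_V : 0 ≤ L_V)
    (hW : ContinuousOn W (Icc 0 T)) (hVc : Continuous V)
    (hVlip : ∀ y y', |V y - V y'| ≤ L_V * ‖y - y'‖)
    (hVbdd : ∀ y, |V y| ≤ Vbound)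
    (hSbdd : ∀ y, |S y| ≤ Sbound)
    (φ : EuclideanSpace ℝ (Fin n) → ℝ) (g : ℝ → ℝ) (s₀ : ℝ) (x₀ : EuclideanSpace ℝ (Fin n))
    (hφ : IsC2b φ) (hg : ContDiff ℝ 1 g) (hs₀ : s₀ ∈ Ioo (0 : ℝ) T)
    (hmin : IsLocalMin (fun p : ℝ × EuclideanSpace ℝ (Fin n) =>
        value T ν C W V S p.1 p.2 - φ (p.2 + Real.sqrt ν • (W T - W p.1)) - g p.1) (s₀, x₀)) :
    V x₀ - ‖gradient φ (x₀ + Real.sqrt ν • (W T - W s₀))‖ ^ 2 / 2 ≤ -deriv g s₀ := by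
  obtain ⟨hφ2, M, hM⟩ := hφ
  have hC0 : (0:ℝ) ≤ C := hC.le
  have hs₀Icc : s₀ ∈ Icc (0:ℝ) T := ⟨hs₀.1.le, hs₀.2.le⟩
  have hM0 : 0 ≤ M := le_trans (norm_nonneg _) (hM 0).2.1
  set y₀ := x₀ + Real.sqrt ν • (W T - W s₀) with hy₀
  set p := gradient φ y₀ with hpdef
  set K := V x₀ - ‖p‖ ^ 2 / 2 with hKdef
  clear_value K
  show K ≤ -deriv g s₀
  -- the key quantitative estimate
  have key : ∀ ε > (0:ℝ), ∀ᶠ h in nhdsWithin (0:ℝ) (Ioi 0),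
      g (s₀ + h) - g s₀ + h * K ≤ ε * h := by
    intro ε hε
    -- local min radius
    have hmin' : ∀ᶠ q in nhds (s₀, x₀), (fun p : ℝ × EuclideanSpace ℝ (Fin n) =>
        value T ν C W V S p.1 p.2 - φ (p.2 + Real.sqrt ν • (W T - W p.1)) - g p.1) (s₀, x₀) ≤
        (fun p : ℝ × EuclideanSpace ℝ (Fin n) =>
        value T ν C W V S p.1 p.2 - φ (p.2 + Real.sqrt ν • (W T - W p.1)) - g p.1) q := hmin
    obtain ⟨δ, hδ0, hδ⟩ := Metric.eventually_nhds_iff.1 hmin'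
    -- continuity of W at s₀
    have hWc : ContinuousAt W s₀ := hW.continuousAt (Icc_mem_nhds hs₀.1 hs₀.2)
    set η := min (ε / (3 * (L_V * Real.sqrt ν + 1))) (δ / (2 * (Real.sqrt ν + 1))) with hηdef
    have hsq : (0:ℝ) ≤ Real.sqrt ν := Real.sqrt_nonneg ν
    have hη0 : 0 < η := by
      apply lt_min <;> positivity
    have hη1 : L_V * Real.sqrt ν * η ≤ ε / 3 := by
      have h1 : η ≤ ε / (3 * (L_V * Real.sqrt ν + 1)) := min_le_left _ _
      have h2 : (L_V * Real.sqrt ν + 1) * η ≤ (L_V * Real.sqrt ν + 1) *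
          (ε / (3 * (L_V * Real.sqrt ν + 1))) :=
        mul_le_mul_of_nonneg_left h1 (by positivity)
      have h3 : (L_V * Real.sqrt ν + 1) * (ε / (3 * (L_V * Real.sqrt ν + 1))) = ε / 3 := by
        field_simp
      nlinarith [hη0.le, mul_nonneg (mul_nonneg hL_V hsq) hη0.le]
    have hη2 : Real.sqrt ν * η ≤ δ / 2 := by
      have h1 : η ≤ δ / (2 * (Real.sqrt ν + 1)) := min_le_right _ _
      have h2 : (Real.sqrt ν + 1) * η ≤ (Real.sqrt ν + 1) * (δ / (2 * (Real.sqrt ν + 1))) :=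
        mul_le_mul_of_nonneg_left h1 (by positivity)
      have h3 : (Real.sqrt ν + 1) * (δ / (2 * (Real.sqrt ν + 1))) = δ / 2 := by
        field_simp
      nlinarith [hη0.le, mul_nonneg hsq hη0.le]
    obtain ⟨r, hr0, hr⟩ := Metric.continuousAt_iff.1 hWc η hη0
    set D := L_V * C + M * C ^ 2 with hDdef
    have hD0 : 0 ≤ D := by rw [hDdef]; positivity
    set h₀ := min (min (T - s₀) r) (min (δ / (2 * (C + 1))) (ε / (3 * (D + 1)))) with hh₀def
    have hh₀0 : 0 < h₀ := by
      apply lt_min (lt_min (by linarith [hs₀.2]) hr0) (lt_min (by positivity) (by positivity))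
    filter_upwards [Ioo_mem_nhdsGT hh₀0] with h hh
    obtain ⟨hh0, hhh₀⟩ := hh
    have hhT : h < T - s₀ := lt_of_lt_of_le hhh₀ ((min_le_left _ _).trans (min_le_left _ _))
    have hhr : h < r := lt_of_lt_of_le hhh₀ ((min_le_left _ _).trans (min_le_right _ _))
    have hhδ : h < δ / (2 * (C + 1)) :=
      lt_of_lt_of_le hhh₀ ((min_le_right _ _).trans (min_le_left _ _))
    have hhD : h < ε / (3 * (D + 1)) :=
      lt_of_lt_of_le hhh₀ ((min_le_right _ _).trans (min_le_right _ _))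
    have hhD' : h * D ≤ ε / 3 := by
      have h2 : (D + 1) * h ≤ (D + 1) * (ε / (3 * (D + 1))) :=
        mul_le_mul_of_nonneg_left hhD.le (by positivity)
      have h3 : (D + 1) * (ε / (3 * (D + 1))) = ε / 3 := by field_simp
      nlinarith [mul_nonneg hD0 hh0.le]
    have hChδ : C * h < δ / 2 := by
      have h1 : C * h < (C + 1) * h := by nlinarith
      have h2 : (C + 1) * h < (C + 1) * (δ / (2 * (C + 1))) :=
        mul_lt_mul_of_pos_left hhδ (by positivity)
      have h3 : (C + 1) * (δ / (2 * (C + 1))) = δ / 2 := by field_simp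
      linarith
    -- near-optimal control
    obtain ⟨rr, hrrmem, hrr⟩ := exists_lt_of_csInf_lt
      (value_set_nonempty (T := T) (ν := ν) (W := W) (V := V) (S := S) hC0 s₀ x₀)
      (lt_add_of_pos_right (value T ν C W V S s₀ x₀) (by positivity : (0:ℝ) < ε / 3 * h))
    obtain ⟨u, hu, rfl⟩ := hrrmem
    set t₁ := s₀ + h with ht₁def
    have ht₁Icc : t₁ ∈ Icc (0:ℝ) T := ⟨by rw [ht₁def]; linarith [hs₀.1], by rw [ht₁def]; linarith⟩
    set x₁ := ctrlPath ν W s₀ x₀ u t₁ with hx₁def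
    clear_value x₁
    set I := ∫ r in s₀..t₁, u r with hIdef
    clear_value I
    have hI : ‖I‖ ≤ C * h := by
      rw [hIdef]
      have := norm_intInt_le hu s₀ t₁
      rwa [show t₁ - s₀ = h by rw [ht₁def]; ring, abs_of_pos hh0] at this
    have hWbd : ∀ s ∈ Icc s₀ t₁, ‖W s - W s₀‖ ≤ η := fun s hs => by
      have hd : dist s s₀ < r := by
        rw [Real.dist_eq, abs_of_nonneg (by linarith [hs.1])]
        linarith [hs.2]
      have := hr hd
      rw [dist_eq_norm] at this
      exact this.le
    have hWs₀ : ‖W t₁ - W s₀‖ ≤ η := hWbd t₁ ⟨by rw [ht₁def]; linarith, le_refl _⟩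
    have hZbd : ∀ s ∈ Icc s₀ t₁, ‖ctrlPath ν W s₀ x₀ u s - x₀‖ ≤ C * h + Real.sqrt ν * η :=
      fun s hs => by
      have hrepr : ctrlPath ν W s₀ x₀ u s - x₀ =
          (∫ r in s₀..s, u r) + Real.sqrt ν • (W s - W s₀) := by
        unfold ctrlPath; abel
      rw [hrepr]
      refine le_trans (norm_add_le _ _) (add_le_add ?_ ?_)
      · have := norm_intInt_le hu s₀ s
        have h2 : |s - s₀| ≤ h := by
          rw [abs_of_nonneg (by linarith [hs.1])]; linarith [hs.2]
        nlinarith [this, h2, hC0]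
      · rw [norm_smul, Real.norm_eq_abs, abs_of_nonneg hsq]
        exact mul_le_mul_of_nonneg_left (hWbd s hs) hsq
    have hx₁bd : ‖x₁ - x₀‖ ≤ C * h + Real.sqrt ν * η := by
      rw [hx₁def]
      exact hZbd t₁ ⟨by rw [ht₁def]; linarith, le_refl _⟩
    -- apply local min at (t₁, x₁)
    have hdist : dist (t₁, x₁) (s₀, x₀) < δ := by
      rw [Prod.dist_eq]
      refine max_lt ?_ ?_
      · rw [Real.dist_eq, show t₁ - s₀ = h by rw [ht₁def]; ring, abs_of_pos hh0]
        calc h < δ / (2 * (C + 1)) := hhδ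
          _ ≤ δ / 2 := by
            apply div_le_div_of_nonneg_left hδ0.le (by norm_num) (by nlinarith)
          _ < δ := by linarith
      · rw [dist_eq_norm]
        calc ‖x₁ - x₀‖ ≤ C * h + Real.sqrt ν * η := hx₁bd
          _ < δ / 2 + δ / 2 := by
            have := hη2
            linarith
          _ = δ := by ring
    have hminq := hδ hdist
    simp only at hminq
    rw [← hy₀] at hminq
    have hshift : x₁ + Real.sqrt ν • (W T - W t₁) = y₀ + I := by
      rw [hx₁def, hy₀, hIdef]
      show (x₀ + (∫ r in s₀..t₁, u r) + Real.sqrt ν • (W t₁ - W s₀)) +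
        Real.sqrt ν • (W T - W t₁) = (x₀ + Real.sqrt ν • (W T - W s₀)) + (∫ r in s₀..t₁, u r)
      module
    rw [hshift] at hminq
    -- split the action
    have hsplit : action T ν W V S s₀ x₀ u =
        (∫ s in s₀..t₁, (‖u s‖ ^ 2 / 2 + V (ctrlPath ν W s₀ x₀ u s))) +
          action T ν W V S t₁ x₁ u := by
      rw [hx₁def]
      exact action_split (ν := ν) (S := S) hW hVc hu x₀ hs₀Icc ht₁Icc
    have hval1 : value T ν C W V S t₁ x₁ ≤ action T ν W V S t₁ x₁ u :=
      value_le_action hVbdd hSbdd hW hVc ht₁Icc x₁ hu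
    -- lower bound on the head integral
    have hinner_int : IntervalIntegrable (fun s => (inner ℝ p (u s) : ℝ))
        MeasureTheory.volume s₀ t₁ := by
      rw [intervalIntegrable_iff]
      refine Measure.integrableOn_of_bounded (M := ‖p‖ * C)
        (by rw [Set.uIoc]; exact measure_Ioc_lt_top.ne)
        ((measurable_const.inner hu.1).aestronglyMeasurable) (ae_of_all _ fun s => ?_)
      calc ‖(inner ℝ p (u s) : ℝ)‖ ≤ ‖p‖ * ‖u s‖ := norm_inner_le_norm _ _
        _ ≤ ‖p‖ * C := mul_le_mul_of_nonneg_left (hu.2 s) (norm_nonneg _)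
    have hcost_int := cost_intervalIntegrable (ν := ν) (V := V) hW hVc hu s₀ x₀ hs₀Icc ht₁Icc
    have hcomm : (∫ s in s₀..t₁, (inner ℝ p (u s) : ℝ)) = (inner ℝ p I : ℝ) := by
      rw [hIdef]
      clear hI
      have := (innerSL ℝ p).intervalIntegral_comp_comm (adm_intervalIntegrable hu s₀ t₁)
      simpa using this
    have hptwise : ∀ s ∈ Icc s₀ t₁,
        V x₀ - L_V * (C * h + Real.sqrt ν * η) - ‖p‖ ^ 2 / 2 ≤
        (‖u s‖ ^ 2 / 2 + V (ctrlPath ν W s₀ x₀ u s)) + (inner ℝ p (u s) : ℝ) := fun s hs => by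
      have h1 : 0 ≤ ‖u s + p‖ ^ 2 := sq_nonneg _
      rw [norm_add_sq_real] at h1
      have h2 : (inner ℝ (u s) p : ℝ) = (inner ℝ p (u s) : ℝ) := real_inner_comm _ _
      have h3 := hVlip x₀ (ctrlPath ν W s₀ x₀ u s)
      have h4 := (abs_le.1 h3).2
      have h5 : L_V * ‖x₀ - ctrlPath ν W s₀ x₀ u s‖ ≤ L_V * (C * h + Real.sqrt ν * η) := by
        rw [norm_sub_rev]
        exact mul_le_mul_of_nonneg_left (hZbd s hs) hL_V
      nlinarith [sq_nonneg (‖u s‖)]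
    have hmono : (t₁ - s₀) • (V x₀ - L_V * (C * h + Real.sqrt ν * η) - ‖p‖ ^ 2 / 2) ≤
        ∫ s in s₀..t₁, ((‖u s‖ ^ 2 / 2 + V (ctrlPath ν W s₀ x₀ u s)) + (inner ℝ p (u s) : ℝ)) := by
      rw [← intervalIntegral.integral_const]
      exact intervalIntegral.integral_mono_on (by linarith) intervalIntegrable_const
        (hcost_int.add hinner_int) hptwise
    have hadd : (∫ s in s₀..t₁, ((‖u s‖ ^ 2 / 2 + V (ctrlPath ν W s₀ x₀ u s)) +
        (inner ℝ p (u s) : ℝ))) =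
        (∫ s in s₀..t₁, (‖u s‖ ^ 2 / 2 + V (ctrlPath ν W s₀ x₀ u s))) +
        ∫ s in s₀..t₁, (inner ℝ p (u s) : ℝ) :=
      intervalIntegral.integral_add hcost_int hinner_int
    have hH : h * (V x₀ - L_V * (C * h + Real.sqrt ν * η) - ‖p‖ ^ 2 / 2) ≤
        (∫ s in s₀..t₁, (‖u s‖ ^ 2 / 2 + V (ctrlPath ν W s₀ x₀ u s))) + (inner ℝ p I : ℝ) := by
      rw [← hcomm, ← hadd]
      have : t₁ - s₀ = h := by rw [ht₁def]; ring
      rw [this, smul_eq_mul] at hmono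
      exact hmono
    -- Taylor lower bound
    have htay := taylor_lb hφ2 (fun y => (hM y).2.2) y₀ I
    rw [← hpdef] at htay
    have hIsq : M * ‖I‖ ^ 2 ≤ M * C ^ 2 * h ^ 2 := by
      have h1 : ‖I‖ * ‖I‖ ≤ (C * h) * (C * h) :=
        mul_le_mul hI hI (norm_nonneg I) (by positivity)
      nlinarith [h1, hM0]
    -- assemble
    have hfinal : g (s₀ + h) - g s₀ + h * K ≤
        ε / 3 * h + h * (L_V * (C * h + Real.sqrt ν * η)) + M * C ^ 2 * h ^ 2 := by
      rw [hKdef, ← ht₁def]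
      linarith [hrr, hsplit, hval1, hminq, hH, htay, hIsq]
    have hb2 : h * (L_V * (C * h + Real.sqrt ν * η)) + M * C ^ 2 * h ^ 2 ≤
        ε / 3 * h + ε / 3 * h := by
      have h1 : h * (L_V * Real.sqrt ν * η) ≤ ε / 3 * h := by
        nlinarith [hη1, hh0.le]
      have h2 : h * (L_V * C * h) + M * C ^ 2 * h ^ 2 = (h * D) * h := by
        rw [hDdef]; ring
      have h3 : (h * D) * h ≤ ε / 3 * h :=
        mul_le_mul_of_nonneg_right hhD' hh0.le
      nlinarith [h1, h3]
    linarith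
  -- conclude via the derivative of g
  have hgd : HasDerivAt g (deriv g s₀) s₀ :=
    ((hg.differentiable one_ne_zero) s₀).hasDerivAt
  have hmap : Filter.Tendsto (fun h : ℝ => s₀ + h) (nhdsWithin (0:ℝ) (Ioi 0))
      (nhdsWithin s₀ {s₀}ᶜ) := by
    rw [tendsto_nhdsWithin_iff]
    constructor
    · have : Filter.Tendsto (fun h : ℝ => s₀ + h) (nhds 0) (nhds (s₀ + 0)) :=
        (continuous_const.add continuous_id).tendsto 0
      rw [add_zero] at this
      exact this.mono_left nhdsWithin_le_nhds
    · filter_upwards [self_mem_nhdsWithin] with h hh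
      simp only [mem_compl_iff, mem_singleton_iff]
      intro hcon
      exact (ne_of_gt (mem_Ioi.1 hh)) (by linarith)
  have hslope : Filter.Tendsto (fun h : ℝ => (g (s₀ + h) - g s₀) / h)
      (nhdsWithin (0:ℝ) (Ioi 0)) (nhds (deriv g s₀)) := by
    have h2 := (hasDerivAt_iff_tendsto_slope.1 hgd).comp hmap
    refine h2.congr fun h => ?_
    simp only [Function.comp_apply, slope_def_field]
    rw [add_sub_cancel_left]
  have hfin : ∀ ε > (0:ℝ), deriv g s₀ + K ≤ ε := fun ε hε => by
    have hev2 : ∀ᶠ h in nhdsWithin (0:ℝ) (Ioi 0), (g (s₀ + h) - g s₀) / h + K ≤ ε := by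
      filter_upwards [key ε hε, self_mem_nhdsWithin] with h hh (hh0 : h ∈ Ioi 0)
      rw [div_add' _ _ _ (ne_of_gt hh0), div_le_iff₀ hh0]
      linarith
    exact le_of_tendsto (hslope.add_const K) hev2
  by_contra hcon
  push_neg at hcon
  have h1 := hfin ((deriv g s₀ + K) / 2) (by linarith)
  linarith
end part4b


set_option maxHeartbeats 2000000 in
/-- existence, supersolution part: the value function `U` is a pathwise
viscosity supersolution of `dv = −√ν ∇v ∘ dW + (V(x) − ‖∇v‖²/2) ds` with terminal data `S`:
it is bounded below and lower semicontinuous, `U(T,·) ≥ S`, and at any local minimum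
`(s₀,x₀) ∈ (0,T) × ℝⁿ` of `U − Φ_φ − g` one has
`−g′(s₀) ≥ V(x₀) − ‖∇φ(x₀ + √ν(W(T) − W(s₀)))‖²/2`. -/
theorem statement9
    (n : ℕ) (hn : 1 ≤ n) (T ν C L_V L_S Vbound Sbound : ℝ)
    (hT : 0 < T) (hν : 0 < ν) (hC : 0 < C)
    (W : ℝ → EuclideanSpace ℝ (Fin n)) (hW : ContinuousOn W (Icc 0 T))
    (V S : EuclideanSpace ℝ (Fin n) → ℝ)
    (hVlip : ∀ y y', |V y - V y'| ≤ L_V * ‖y - y'‖)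
    (hVbdd : ∀ y, |V y| ≤ Vbound)
    (hSlip : ∀ y y', |S y - S y'| ≤ L_S * ‖y - y'‖)
    (hSbdd : ∀ y, |S y| ≤ Sbound) :
    (∃ m : ℝ, ∀ s ∈ Icc (0 : ℝ) T, ∀ y, m ≤ value T ν C W V S s y) ∧
    LowerSemicontinuousOn (fun p : ℝ × EuclideanSpace ℝ (Fin n) => value T ν C W V S p.1 p.2)
      (Icc 0 T ×ˢ (univ : Set (EuclideanSpace ℝ (Fin n)))) ∧
    (∀ y, S y ≤ value T ν C W V S T y) ∧
    (∀ (φ : EuclideanSpace ℝ (Fin n) → ℝ) (g : ℝ → ℝ) (s₀ : ℝ) (x₀ : EuclideanSpace ℝ (Fin n)),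
      IsC2b φ → ContDiff ℝ 1 g → s₀ ∈ Ioo (0 : ℝ) T →
      IsLocalMin (fun p : ℝ × EuclideanSpace ℝ (Fin n) =>
        value T ν C W V S p.1 p.2 - φ (p.2 + Real.sqrt ν • (W T - W p.1)) - g p.1) (s₀, x₀) →
      V x₀ - ‖gradient φ (x₀ + Real.sqrt ν • (W T - W s₀))‖ ^ 2 / 2 ≤ -deriv g s₀) := by
  -- preliminaries
  have hC0 : (0 : ℝ) ≤ C := hC.le
  have e₀ : EuclideanSpace ℝ (Fin n) := EuclideanSpace.single (⟨0, hn⟩ : Fin n) (1 : ℝ)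
  have he₀ : ‖EuclideanSpace.single (⟨0, hn⟩ : Fin n) (1 : ℝ)‖ = 1 := by
    rw [EuclideanSpace.norm_single]; norm_num
  have hL_V : 0 ≤ L_V := by
    have h := hVlip (EuclideanSpace.single (⟨0, hn⟩ : Fin n) (1 : ℝ)) 0
    rw [sub_zero, he₀, mul_one] at h
    exact le_trans (abs_nonneg _) h
  have hL_S : 0 ≤ L_S := by
    have h := hSlip (EuclideanSpace.single (⟨0, hn⟩ : Fin n) (1 : ℝ)) 0
    rw [sub_zero, he₀, mul_one] at h
    exact le_trans (abs_nonneg _) h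
  have hVc : Continuous V := by
    refine (LipschitzWith.of_dist_le_mul (K := Real.toNNReal L_V) fun y y' => ?_).continuous
    rw [Real.dist_eq, dist_eq_norm]
    exact le_trans (hVlip y y')
      (mul_le_mul_of_nonneg_right (Real.le_coe_toNNReal L_V) (norm_nonneg _))
  refine ⟨⟨-(T * Vbound + Sbound), fun s hs y => value_lb hC0 hVbdd hSbdd hW hVc hs y⟩, ?_, ?_, ?_⟩
  · -- lower semicontinuity
    rintro ⟨t, x⟩ hp c hc
    set s := Icc (0:ℝ) T ×ˢ (univ : Set (EuclideanSpace ℝ (Fin n))) with hs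
    have htIcc : t ∈ Icc (0:ℝ) T := hp.1
    set Ψ : ℝ × EuclideanSpace ℝ (Fin n) → ℝ := fun q =>
      (L_V * T + L_S) * (‖x - q.2‖ + C * |t - q.1| + Real.sqrt ν * ‖W t - W q.1‖) +
      (C ^ 2 / 2 + Vbound) * |t - q.1| with hΨdef
    have hWq : ContinuousWithinAt (fun q : ℝ × EuclideanSpace ℝ (Fin n) => W q.1) s (t, x) :=
      (hW t htIcc).comp continuous_fst.continuousWithinAt (fun q hq => hq.1)
    have h1 : ContinuousWithinAt
        (fun q : ℝ × EuclideanSpace ℝ (Fin n) => ‖x - q.2‖) s (t, x) :=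
      (continuousWithinAt_const.sub continuous_snd.continuousWithinAt).norm
    have h2 : ContinuousWithinAt
        (fun q : ℝ × EuclideanSpace ℝ (Fin n) => |t - q.1|) s (t, x) :=
      (continuousWithinAt_const.sub continuous_fst.continuousWithinAt).abs
    have h3 : ContinuousWithinAt
        (fun q : ℝ × EuclideanSpace ℝ (Fin n) => ‖W t - W q.1‖) s (t, x) :=
      (continuousWithinAt_const.sub hWq).norm
    have hΨc : ContinuousWithinAt Ψ s (t, x) :=
      (continuousWithinAt_const.mul ((h1.add (continuousWithinAt_const.mul h2)).add
        (continuousWithinAt_const.mul h3))).add (continuousWithinAt_const.mul h2)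
    have hΨ0 : Ψ (t, x) = 0 := by simp [hΨdef]
    have hε : 0 < value T ν C W V S t x - c := by linarith
    have hev : ∀ᶠ q in nhdsWithin (t, x) s, Ψ q < value T ν C W V S t x - c := by
      have := hΨc
      rw [ContinuousWithinAt, hΨ0] at this
      exact this.eventually_lt_const hε
    filter_upwards [hev, self_mem_nhdsWithin] with q hq hqs
    have hcomp := value_compare (ν := ν) hC0 hL_V hL_S hVlip hVbdd hSbdd hSlip hW hVc
      htIcc (hqs.1 : q.1 ∈ Icc (0:ℝ) T) x q.2
    simp only [hΨdef] at hq
    linarith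
  · exact fun y => value_terminal hC0 y
  · exact fun φ g s₀ x₀ hφ hg hs₀ hmin =>
      part4_main hT hν hC hL_V hW hVc hVlip hVbdd hSbdd φ g s₀ x₀ hφ hg hs₀ hmin
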